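/- arXiv:1906.03505 — 7 statements merged into one kernel-verified Lean document; each statement's English description precedes it below -/
import Mathlib

section
/- Let G : ℝⁿ → ℝᵐ admit first- and second-order divided differences δG and δ²G satisfying δG(u,y) − δG(v,y) = δ²G(u,y,v)(u − v) and δG(x,u) − δG(x,v) = δ²G(x,u,v)(u − v), and suppose ‖δG(x,y) − δG(u,v)‖ ≤ M₀(‖x − u‖ + ‖y − v‖) and ‖δ²G(u,x,y) − δ²G(v,x,y)‖ ≤ N₀‖u − v‖. Then for any x₀, x₋₁ and x*, ‖δG(2x₀ − x₋₁, x₋₁) − δG(x₀, x*)‖ ≤ N₀‖x₀ − x₋₁‖² + M₀‖x₀ − x*‖. -/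
/-!
Write `a = 2x₀ − x₋₁`, so that `x₀` is the midpoint of `a` and `x₋₁`. The two divided-difference
laws telescope `δG(a, x₋₁) − δG(x₀, x₀)` into `(δ²G(a, x₋₁, x₀) − δ²G(x₀, x₋₁, x₀))(x₀ − x₋₁)`,
which the Lipschitz bound on `δ²G` in its first argument makes quadratic in `‖x₀ − x₋₁‖`; the
remaining difference `δG(x₀, x₀) − δG(x₀, x*)` is controlled by the Lipschitz bound on `δG`.
-/

section DividedDifference

variable {𝕜 E F : Type*} [NontriviallyNormedField 𝕜]
  [NormedAddCommGroup E] [NormedSpace 𝕜 E] [NormedAddCommGroup F] [NormedSpace 𝕜 F]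
  {δG : E → E → E →L[𝕜] F} {δ₂G : E → E → E → E →L[𝕜] E →L[𝕜] F}

theorem dividedDiff_sub_diag_eq_of_sub_eq_sub
    (hlaw₁ : ∀ u v y, δG u y - δG v y = (δ₂G u y v) (u - v))
    (hlaw₂ : ∀ x u v, δG x u - δG x v = (δ₂G x u v) (u - v))
    {u v y : E} (hmid : u - v = v - y) :
    δG u y - δG v v = (δ₂G u y v - δ₂G v y v) (u - v) := by
  have hyv : y - v = -(u - v) := by rw [hmid, neg_sub]
  calc δG u y - δG v v = (δG u y - δG v y) + (δG v y - δG v v) := by abel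
    _ = (δ₂G u y v) (u - v) + (δ₂G v y v) (y - v) := by rw [hlaw₁, hlaw₂]
    _ = (δ₂G u y v - δ₂G v y v) (u - v) := by
      rw [hyv, map_neg, sub_apply, ← sub_eq_add_neg]

theorem norm_dividedDiff_sub_diag_le_of_sub_eq_sub
    (hlaw₁ : ∀ u v y, δG u y - δG v y = (δ₂G u y v) (u - v))
    (hlaw₂ : ∀ x u v, δG x u - δG x v = (δ₂G x u v) (u - v))
    {N₀ : ℝ} (hN₀ : ∀ u v x y, ‖δ₂G u x y - δ₂G v x y‖ ≤ N₀ * ‖u - v‖)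
    {u v y : E} (hmid : u - v = v - y) :
    ‖δG u y - δG v v‖ ≤ N₀ * ‖u - v‖ ^ 2 :=
  calc ‖δG u y - δG v v‖ = ‖(δ₂G u y v - δ₂G v y v) (u - v)‖ := by
        rw [dividedDiff_sub_diag_eq_of_sub_eq_sub hlaw₁ hlaw₂ hmid]
    _ ≤ ‖δ₂G u y v - δ₂G v y v‖ * ‖u - v‖ := ContinuousLinearMap.le_opNorm _ _
    _ ≤ N₀ * ‖u - v‖ * ‖u - v‖ := by gcongr; exact hN₀ u v y v
    _ = N₀ * ‖u - v‖ ^ 2 := by ring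

end DividedDifference

theorem kurchatov_divided_difference_estimate_two_general
    {n m : ℕ}
    (δG : EuclideanSpace ℝ (Fin n) → EuclideanSpace ℝ (Fin n) →
      (EuclideanSpace ℝ (Fin n) →L[ℝ] EuclideanSpace ℝ (Fin m)))
    (δ₂G : EuclideanSpace ℝ (Fin n) → EuclideanSpace ℝ (Fin n) →
      EuclideanSpace ℝ (Fin n) →
      (EuclideanSpace ℝ (Fin n) →L[ℝ]
        (EuclideanSpace ℝ (Fin n) →L[ℝ] EuclideanSpace ℝ (Fin m))))
    (hlaw₁ : ∀ u v y, δG u y - δG v y = (δ₂G u y v) (u - v))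
    (hlaw₂ : ∀ x u v, δG x u - δG x v = (δ₂G x u v) (u - v))
    (M₀ N₀ : ℝ)
    (hM₀ : ∀ x y u v, ‖δG x y - δG u v‖ ≤ M₀ * (‖x - u‖ + ‖y - v‖))
    (hN₀ : ∀ u v x y, ‖δ₂G u x y - δ₂G v x y‖ ≤ N₀ * ‖u - v‖)
    (x₀ xm1 xs : EuclideanSpace ℝ (Fin n)) :
    ‖δG (2 • x₀ - xm1) xm1 - δG x₀ xs‖ ≤
      N₀ * ‖x₀ - xm1‖ ^ 2 + M₀ * ‖x₀ - xs‖ := by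
  have hmid : (2 • x₀ - xm1) - x₀ = x₀ - xm1 := by rw [two_smul]; abel
  have hsecond := norm_dividedDiff_sub_diag_le_of_sub_eq_sub hlaw₁ hlaw₂ hN₀ hmid
  rw [hmid] at hsecond
  have hfirst : ‖δG x₀ x₀ - δG x₀ xs‖ ≤ M₀ * ‖x₀ - xs‖ := by
    simpa using hM₀ x₀ x₀ x₀ xs
  calc ‖δG (2 • x₀ - xm1) xm1 - δG x₀ xs‖
      = ‖(δG (2 • x₀ - xm1) xm1 - δG x₀ x₀) + (δG x₀ x₀ - δG x₀ xs)‖ := by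
        rw [sub_add_sub_cancel]
    _ ≤ ‖δG (2 • x₀ - xm1) xm1 - δG x₀ x₀‖ + ‖δG x₀ x₀ - δG x₀ xs‖ := norm_add_le _ _
    _ ≤ N₀ * ‖x₀ - xm1‖ ^ 2 + M₀ * ‖x₀ - xs‖ := add_le_add hsecond hfirst

/-- divided-difference estimate
`‖δG(2x₀ − x₋₁, x₋₁) − δG(x₀, x*)‖ ≤ N₀‖x₀ − x₋₁‖² + M₀‖x₀ − x*‖`. -/
theorem kurchatov_divided_difference_estimate_two
    {n m : ℕ}
    (G : EuclideanSpace ℝ (Fin n) → EuclideanSpace ℝ (Fin m))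
    (δG : EuclideanSpace ℝ (Fin n) → EuclideanSpace ℝ (Fin n) →
      (EuclideanSpace ℝ (Fin n) →L[ℝ] EuclideanSpace ℝ (Fin m)))
    (δ₂G : EuclideanSpace ℝ (Fin n) → EuclideanSpace ℝ (Fin n) →
      EuclideanSpace ℝ (Fin n) →
      (EuclideanSpace ℝ (Fin n) →L[ℝ]
        (EuclideanSpace ℝ (Fin n) →L[ℝ] EuclideanSpace ℝ (Fin m))))
    (hδG : ∀ x y, (δG x y) (x - y) = G x - G y)
    (hlaw₁ : ∀ u v y, δG u y - δG v y = (δ₂G u y v) (u - v))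
    (hlaw₂ : ∀ x u v, δG x u - δG x v = (δ₂G x u v) (u - v))
    (M₀ N₀ : ℝ)
    (hM₀ : ∀ x y u v, ‖δG x y - δG u v‖ ≤ M₀ * (‖x - u‖ + ‖y - v‖))
    (hN₀ : ∀ u v x y, ‖δ₂G u x y - δ₂G v x y‖ ≤ N₀ * ‖u - v‖)
    (x₀ xm1 xs : EuclideanSpace ℝ (Fin n)) :
    ‖δG (2 • x₀ - xm1) xm1 - δG x₀ xs‖ ≤
      N₀ * ‖x₀ - xm1‖ ^ 2 + M₀ * ‖x₀ - xs‖ :=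
  kurchatov_divided_difference_estimate_two_general δG δ₂G hlaw₁ hlaw₂ M₀ N₀ hM₀ hN₀ x₀ xm1 xs
end

section
/- Let F : ℝⁿ → ℝᵐ be differentiable with ‖F'(x) − F'(x*)‖ ≤ L₀‖x − x*‖, and let G : ℝⁿ → ℝᵐ admit first- and second-order divided differences δG and δ²G satisfying δG(u,y) − δG(v,y) = δ²G(u,y,v)(u − v), δG(x,u) − δG(x,v) = δ²G(x,u,v)(u − v), ‖δG(x,y) − δG(u,v)‖ ≤ M₀(‖x − u‖ + ‖y − v‖), and ‖δ²G(u,x,y) − δ²G(v,x,y)‖ ≤ N₀‖u − v‖. Set A₀ = F'(x₀) + δG(2x₀ − x₋₁, x₋₁) and A* = F'(x*) + δG(x*, x*). Then ‖A₀ − A*‖ ≤ (L₀ + 2M₀)‖x₀ − x*‖ + N₀‖x₀ − x₋₁‖², and consequently ‖A₀‖ ≤ α + (L₀ + 2M₀)‖x₀ − x*‖ + N₀‖x₀ − x₋₁‖² whenever ‖A*‖ ≤ α. -/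
/-!
Split `A₀ − A*` as `(F'(x₀) − F'(x*)) + (δG(2x₀ − x₋₁, x₋₁) − δG(x₀, x₀)) + (δG(x₀, x₀) − δG(x*, x*))`.
The outer terms are Lipschitz estimates. In the middle one, changing the first argument from
`2x₀ − x₋₁` to `x₀` and then the second from `x₋₁` to `x₀` moves by `±(x₀ − x₋₁)` both times, so the
two first-order laws turn it into `(δ²G(2x₀ − x₋₁, x₋₁, x₀) − δ²G(x₀, x₋₁, x₀))(x₀ − x₋₁)`, a difference
in the first slot of `δ²G` of size `‖x₀ − x₋₁‖`, hence of norm at most `N₀‖x₀ − x₋₁‖²`.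
-/

section DividedDifferences

variable {𝕜 E F : Type*} [NontriviallyNormedField 𝕜] [NormedAddCommGroup E] [NormedSpace 𝕜 E]
  [NormedAddCommGroup F] [NormedSpace 𝕜 F]
  {δG : E → E → E →L[𝕜] F} {δ₂G : E → E → E → E →L[𝕜] E →L[𝕜] F}

theorem divDiff_reflect_sub_divDiff_diag
    (hlaw₁ : ∀ u v y, δG u y - δG v y = δ₂G u y v (u - v))
    (hlaw₂ : ∀ x u v, δG x u - δG x v = δ₂G x u v (u - v)) (x y : E) :
    δG (2 • x - y) y - δG x x = (δ₂G (2 • x - y) y x - δ₂G x y x) (x - y) := by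
  have hreflect : 2 • x - y - x = x - y := by rw [two_smul]; abel
  calc δG (2 • x - y) y - δG x x
      = (δG (2 • x - y) y - δG x y) + (δG x y - δG x x) := by abel
    _ = δ₂G (2 • x - y) y x (x - y) - δ₂G x y x (x - y) := by
      rw [hlaw₁, hlaw₂, hreflect, ← neg_sub x y, map_neg, ← sub_eq_add_neg]
    _ = (δ₂G (2 • x - y) y x - δ₂G x y x) (x - y) := rfl

theorem norm_divDiff_reflect_sub_divDiff_diag_le
    (hlaw₁ : ∀ u v y, δG u y - δG v y = δ₂G u y v (u - v))
    (hlaw₂ : ∀ x u v, δG x u - δG x v = δ₂G x u v (u - v))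
    {N₀ : ℝ} (hN₀ : ∀ u v x y, ‖δ₂G u x y - δ₂G v x y‖ ≤ N₀ * ‖u - v‖) (x y : E) :
    ‖δG (2 • x - y) y - δG x x‖ ≤ N₀ * ‖x - y‖ ^ 2 := by
  have hreflect : 2 • x - y - x = x - y := by rw [two_smul]; abel
  rw [divDiff_reflect_sub_divDiff_diag hlaw₁ hlaw₂]
  calc ‖(δ₂G (2 • x - y) y x - δ₂G x y x) (x - y)‖
      ≤ ‖δ₂G (2 • x - y) y x - δ₂G x y x‖ * ‖x - y‖ := ContinuousLinearMap.le_opNorm _ _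
    _ ≤ N₀ * ‖x - y‖ * ‖x - y‖ := by
      gcongr
      rw [← hreflect]
      exact hN₀ (2 • x - y) x y x
    _ = N₀ * ‖x - y‖ ^ 2 := by ring

theorem norm_deriv_add_divDiff_reflect_sub_le {F' : E → E →L[𝕜] F}
    (hlaw₁ : ∀ u v y, δG u y - δG v y = δ₂G u y v (u - v))
    (hlaw₂ : ∀ x u v, δG x u - δG x v = δ₂G x u v (u - v))
    {L₀ M₀ N₀ : ℝ} {xs : E}
    (hL₀ : ∀ x, ‖F' x - F' xs‖ ≤ L₀ * ‖x - xs‖)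
    (hM₀ : ∀ x y u v, ‖δG x y - δG u v‖ ≤ M₀ * (‖x - u‖ + ‖y - v‖))
    (hN₀ : ∀ u v x y, ‖δ₂G u x y - δ₂G v x y‖ ≤ N₀ * ‖u - v‖) (x₀ xm1 : E) :
    ‖(F' x₀ + δG (2 • x₀ - xm1) xm1) - (F' xs + δG xs xs)‖ ≤
      (L₀ + 2 * M₀) * ‖x₀ - xs‖ + N₀ * ‖x₀ - xm1‖ ^ 2 := by
  have hsplit : (F' x₀ + δG (2 • x₀ - xm1) xm1) - (F' xs + δG xs xs) =
      (F' x₀ - F' xs) + (δG (2 • x₀ - xm1) xm1 - δG x₀ x₀) + (δG x₀ x₀ - δG xs xs) := by abel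
  have hdiag := hM₀ x₀ x₀ xs xs
  rw [hsplit]
  calc _ ≤ ‖F' x₀ - F' xs‖ + ‖δG (2 • x₀ - xm1) xm1 - δG x₀ x₀‖ + ‖δG x₀ x₀ - δG xs xs‖ :=
        norm_add₃_le
    _ ≤ L₀ * ‖x₀ - xs‖ + N₀ * ‖x₀ - xm1‖ ^ 2 + M₀ * (‖x₀ - xs‖ + ‖x₀ - xs‖) := by
      gcongr
      exacts [hL₀ x₀, norm_divDiff_reflect_sub_divDiff_diag_le hlaw₁ hlaw₂ hN₀ x₀ xm1]
    _ = (L₀ + 2 * M₀) * ‖x₀ - xs‖ + N₀ * ‖x₀ - xm1‖ ^ 2 := by ring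

end DividedDifferences

theorem A0_sub_Astar_estimate_general
    {n m : ℕ}
    (F' : EuclideanSpace ℝ (Fin n) →
      (EuclideanSpace ℝ (Fin n) →L[ℝ] EuclideanSpace ℝ (Fin m)))
    (δG : EuclideanSpace ℝ (Fin n) → EuclideanSpace ℝ (Fin n) →
      (EuclideanSpace ℝ (Fin n) →L[ℝ] EuclideanSpace ℝ (Fin m)))
    (δ₂G : EuclideanSpace ℝ (Fin n) → EuclideanSpace ℝ (Fin n) →
      EuclideanSpace ℝ (Fin n) →
      (EuclideanSpace ℝ (Fin n) →L[ℝ]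
        (EuclideanSpace ℝ (Fin n) →L[ℝ] EuclideanSpace ℝ (Fin m))))
    (hlaw₁ : ∀ u v y, δG u y - δG v y = (δ₂G u y v) (u - v))
    (hlaw₂ : ∀ x u v, δG x u - δG x v = (δ₂G x u v) (u - v))
    (L₀ M₀ N₀ α : ℝ)
    (xs : EuclideanSpace ℝ (Fin n))
    (hL₀ : ∀ x, ‖F' x - F' xs‖ ≤ L₀ * ‖x - xs‖)
    (hM₀ : ∀ x y u v, ‖δG x y - δG u v‖ ≤ M₀ * (‖x - u‖ + ‖y - v‖))
    (hN₀ : ∀ u v x y, ‖δ₂G u x y - δ₂G v x y‖ ≤ N₀ * ‖u - v‖)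
    (hα : ‖F' xs + δG xs xs‖ ≤ α)
    (x₀ xm1 : EuclideanSpace ℝ (Fin n)) :
    ‖(F' x₀ + δG (2 • x₀ - xm1) xm1) - (F' xs + δG xs xs)‖ ≤
        (L₀ + 2 * M₀) * ‖x₀ - xs‖ + N₀ * ‖x₀ - xm1‖ ^ 2 ∧
      ‖F' x₀ + δG (2 • x₀ - xm1) xm1‖ ≤
        α + (L₀ + 2 * M₀) * ‖x₀ - xs‖ + N₀ * ‖x₀ - xm1‖ ^ 2 := by
  have hdiff := norm_deriv_add_divDiff_reflect_sub_le hlaw₁ hlaw₂ hL₀ hM₀ hN₀ x₀ xm1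
  have htriangle := norm_le_norm_add_norm_sub' (F' x₀ + δG (2 • x₀ - xm1) xm1) (F' xs + δG xs xs)
  exact ⟨hdiff, by linarith⟩

/-- estimate for `‖A₀ − A*‖` and `‖A₀‖`, where
`A₀ = F'(x₀) + δG(2x₀ − x₋₁, x₋₁)` and `A* = F'(x*) + δG(x*, x*)`. -/
theorem A0_sub_Astar_estimate
    {n m : ℕ}
    (F G : EuclideanSpace ℝ (Fin n) → EuclideanSpace ℝ (Fin m))
    (F' : EuclideanSpace ℝ (Fin n) →
      (EuclideanSpace ℝ (Fin n) →L[ℝ] EuclideanSpace ℝ (Fin m)))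
    (δG : EuclideanSpace ℝ (Fin n) → EuclideanSpace ℝ (Fin n) →
      (EuclideanSpace ℝ (Fin n) →L[ℝ] EuclideanSpace ℝ (Fin m)))
    (δ₂G : EuclideanSpace ℝ (Fin n) → EuclideanSpace ℝ (Fin n) →
      EuclideanSpace ℝ (Fin n) →
      (EuclideanSpace ℝ (Fin n) →L[ℝ]
        (EuclideanSpace ℝ (Fin n) →L[ℝ] EuclideanSpace ℝ (Fin m))))
    (hF' : ∀ x, HasFDerivAt F (F' x) x)
    (hδG : ∀ x y, (δG x y) (x - y) = G x - G y)
    (hlaw₁ : ∀ u v y, δG u y - δG v y = (δ₂G u y v) (u - v))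
    (hlaw₂ : ∀ x u v, δG x u - δG x v = (δ₂G x u v) (u - v))
    (L₀ M₀ N₀ α : ℝ)
    (xs : EuclideanSpace ℝ (Fin n))
    (hL₀ : ∀ x, ‖F' x - F' xs‖ ≤ L₀ * ‖x - xs‖)
    (hM₀ : ∀ x y u v, ‖δG x y - δG u v‖ ≤ M₀ * (‖x - u‖ + ‖y - v‖))
    (hN₀ : ∀ u v x y, ‖δ₂G u x y - δ₂G v x y‖ ≤ N₀ * ‖u - v‖)
    (hα : ‖F' xs + δG xs xs‖ ≤ α)
    (x₀ xm1 : EuclideanSpace ℝ (Fin n)) :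
    ‖(F' x₀ + δG (2 • x₀ - xm1) xm1) - (F' xs + δG xs xs)‖ ≤
        (L₀ + 2 * M₀) * ‖x₀ - xs‖ + N₀ * ‖x₀ - xm1‖ ^ 2 ∧
      ‖F' x₀ + δG (2 • x₀ - xm1) xm1‖ ≤
        α + (L₀ + 2 * M₀) * ‖x₀ - xs‖ + N₀ * ‖x₀ - xm1‖ ^ 2 :=
  A0_sub_Astar_estimate_general F' δG δ₂G hlaw₁ hlaw₂ L₀ M₀ N₀ α xs hL₀ hM₀ hN₀ hα x₀ xm1
end

section
/- Let A and A* be linear maps from ℝⁿ to ℝᵐ such that A*ᵀA* is invertible with ‖(A*ᵀA*)⁻¹‖ ≤ B and ‖A*‖ ≤ α. Then ‖I − (A*ᵀA*)⁻¹AᵀA‖ ≤ B(2α + ‖A − A*‖)·‖A − A*‖, where I is the identity on ℝⁿ. -/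
open ContinuousLinearMap

section NormalOperator

variable {𝕜 E F : Type*} [RCLike 𝕜]
  [NormedAddCommGroup E] [InnerProductSpace 𝕜 E] [CompleteSpace E]
  [NormedAddCommGroup F] [InnerProductSpace 𝕜 F] [CompleteSpace F]

theorem adjoint_comp_self_sub_adjoint_comp_self (A A' : E →L[𝕜] F) :
    (adjoint A').comp A' - (adjoint A).comp A =
      (adjoint A').comp (A' - A) + (adjoint A' - adjoint A).comp (A - A') +
        (adjoint A' - adjoint A).comp A' := by
  simp only [comp_sub, sub_comp]
  abel

theorem norm_adjoint_comp_self_sub_adjoint_comp_self_le (A A' : E →L[𝕜] F) :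
    ‖(adjoint A').comp A' - (adjoint A).comp A‖ ≤ (2 * ‖A'‖ + ‖A - A'‖) * ‖A - A'‖ := by
  have hadj : ‖adjoint A' - adjoint A‖ = ‖A - A'‖ := by
    rw [← map_sub, LinearIsometryEquiv.norm_map, norm_sub_rev]
  rw [adjoint_comp_self_sub_adjoint_comp_self]
  calc _ ≤ ‖(adjoint A').comp (A' - A)‖ + ‖(adjoint A' - adjoint A).comp (A - A')‖ +
          ‖(adjoint A' - adjoint A).comp A'‖ := norm_add₃_le
    _ ≤ ‖adjoint A'‖ * ‖A' - A‖ + ‖adjoint A' - adjoint A‖ * ‖A - A'‖ +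
          ‖adjoint A' - adjoint A‖ * ‖A'‖ := by
        gcongr <;> exact opNorm_comp_le _ _
    _ = (2 * ‖A'‖ + ‖A - A'‖) * ‖A - A'‖ := by
        rw [hadj, LinearIsometryEquiv.norm_map, norm_sub_rev A']
        ring

end NormalOperator

theorem norm_one_sub_inverse_mul_le {R : Type*} [NormedRing R] {u : R} (hu : IsUnit u) (v : R) :
    ‖1 - Ring.inverse u * v‖ ≤ ‖Ring.inverse u‖ * ‖u - v‖ := by
  rw [← Ring.inverse_mul_cancel u hu, ← mul_sub]
  exact norm_mul_le _ _

/-- perturbation bound for the normal operator.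
`Aᵀ` is `ContinuousLinearMap.adjoint A`; composition of linear maps is the ring
multiplication on endomorphisms of `ℝⁿ`, and `(A*ᵀA*)⁻¹` is `Ring.inverse`. -/
theorem norm_id_sub_inv_normal_eq_le
    {n m : ℕ}
    (A Astar : EuclideanSpace ℝ (Fin n) →L[ℝ] EuclideanSpace ℝ (Fin m))
    (B α : ℝ)
    (hUnit : IsUnit ((ContinuousLinearMap.adjoint Astar).comp Astar))
    (hB : ‖Ring.inverse ((ContinuousLinearMap.adjoint Astar).comp Astar)‖ ≤ B)
    (hα : ‖Astar‖ ≤ α) :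
    ‖(1 : EuclideanSpace ℝ (Fin n) →L[ℝ] EuclideanSpace ℝ (Fin n)) -
        Ring.inverse ((ContinuousLinearMap.adjoint Astar).comp Astar) *
          ((ContinuousLinearMap.adjoint A).comp A)‖ ≤
      B * (2 * α + ‖A - Astar‖) * ‖A - Astar‖ := by
  have hB₀ : 0 ≤ B := (norm_nonneg _).trans hB
  calc _ ≤ ‖Ring.inverse ((adjoint Astar).comp Astar)‖ *
        ‖(adjoint Astar).comp Astar - (adjoint A).comp A‖ :=
        norm_one_sub_inverse_mul_le hUnit _
    _ ≤ B * ((2 * ‖Astar‖ + ‖A - Astar‖) * ‖A - Astar‖) :=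
        mul_le_mul hB (norm_adjoint_comp_self_sub_adjoint_comp_self_le A Astar)
          (norm_nonneg _) hB₀
    _ ≤ B * (2 * α + ‖A - Astar‖) * ‖A - Astar‖ := by
        rw [← mul_assoc]
        gcongr
end

section
/- Let F : ℝⁿ → ℝᵐ be continuously differentiable with ‖F'(u) − F'(v)‖ ≤ L‖u − v‖ on a convex set containing all points below, and let G : ℝⁿ → ℝᵐ admit first- and second-order divided differences δG, δ²G satisfying δG(u,y) − δG(v,y) = δ²G(u,y,v)(u − v), δG(x,u) − δG(x,v) = δ²G(x,u,v)(u − v), ‖δG(x,y) − δG(u,v)‖ ≤ M(‖x − u‖ + ‖y − v‖), and ‖δ²G(u,x,y) − δ²G(v,x,y)‖ ≤ N‖u − v‖. Set A₀ = F'(x₀) + δG(2x₀ − x₋₁, x₋₁). Then ‖A₀ − ∫₀¹ F'(x* + t(x₀ − x*)) dt − δG(x₀, x*)‖ ≤ (L/2 + M)‖x₀ − x*‖ + N‖x₀ − x₋₁‖². -/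
/-!
Split the quantity as `(F'(x₀) - ∫₀¹ F'(x* + t(x₀ - x*)) dt)`
`+ (δG(2x₀ - x₋₁, x₋₁) - δG(x₀, x₀)) + (δG(x₀, x₀) - δG(x₀, x*))`.
The first term is at most `∫₀¹ L (1 - t) ‖x₀ - x*‖ dt = L/2 ‖x₀ - x*‖`, the last at most
`M ‖x₀ - x*‖`. For the middle one, changing first the first and then the second argument of `δG`
turns it into `(δ²G(2x₀ - x₋₁, x₋₁, x₀) - δ²G(x₀, x₋₁, x₀)) (x₀ - x₋₁)`, because `2x₀ - x₋₁`
and `x₋₁` are reflections of each other through `x₀`; the `N`-Lipschitz bound on `δ²G` then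
gives `N ‖x₀ - x₋₁‖²`.
-/

open intervalIntegral

section SegmentIntegral

variable {E F : Type*} [NormedAddCommGroup E] [NormedSpace ℝ E]
  [NormedAddCommGroup F] [NormedSpace ℝ F] [CompleteSpace F]

theorem integral_one_sub_eq_half : ∫ t in (0:ℝ)..1, (1 - t) = 1 / 2 := by
  rw [integral_comp_sub_left (fun t => t)]
  norm_num [integral_id]

theorem norm_sub_integral_segment_le {f : E → F} {S : Set E} (hS : Convex ℝ S) {L : ℝ}
    (hL : ∀ u ∈ S, ∀ v ∈ S, ‖f u - f v‖ ≤ L * ‖u - v‖) {a b : E} (ha : a ∈ S) (hb : b ∈ S) :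
    ‖f b - ∫ t in (0:ℝ)..1, f (a + t • (b - a))‖ ≤ L / 2 * ‖b - a‖ := by
  have hseg : ∀ t ∈ Set.Icc (0:ℝ) 1, a + t • (b - a) ∈ S := fun t ht => hS.add_smul_sub_mem ha hb ht
  have hf : ContinuousOn f S :=
    (LipschitzOnWith.of_dist_le' (by simpa only [dist_eq_norm] using hL)).continuousOn
  have hint : IntervalIntegrable (fun t : ℝ => f (a + t • (b - a))) MeasureTheory.volume 0 1 :=
    (hf.comp (by fun_prop) hseg).intervalIntegrable_of_Icc zero_le_one
  have hpoint : ∀ t ∈ Set.Icc (0:ℝ) 1, ‖f b - f (a + t • (b - a))‖ ≤ L * ‖b - a‖ * (1 - t) := by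
    intro t ht
    have hdiff : b - (a + t • (b - a)) = (1 - t) • (b - a) := by
      rw [sub_smul, one_smul]; abel
    calc ‖f b - f (a + t • (b - a))‖ ≤ L * ‖(1 - t) • (b - a)‖ := hdiff ▸ hL b hb _ (hseg t ht)
      _ = L * ‖b - a‖ * (1 - t) := by
        rw [norm_smul, Real.norm_of_nonneg (sub_nonneg.2 ht.2)]; ring
  calc ‖f b - ∫ t in (0:ℝ)..1, f (a + t • (b - a))‖
      = ‖∫ t in (0:ℝ)..1, (f b - f (a + t • (b - a)))‖ := by
        rw [integral_sub intervalIntegrable_const hint, integral_const, sub_zero, one_smul]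
    _ ≤ ∫ t in (0:ℝ)..1, L * ‖b - a‖ * (1 - t) :=
        norm_integral_le_of_norm_le zero_le_one
          (Filter.Eventually.of_forall fun t ht => hpoint t (Set.Ioc_subset_Icc_self ht))
          ((by fun_prop : Continuous fun t : ℝ => L * ‖b - a‖ * (1 - t)).intervalIntegrable _ _)
    _ = L / 2 * ‖b - a‖ := by
        rw [integral_const_mul, integral_one_sub_eq_half]; ring

end SegmentIntegral

theorem two_smul_sub_sub_self {A : Type*} [AddCommGroup A] (x y : A) : 2 • x - y - x = x - y := by
  rw [two_smul]; abel

section DividedDifference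

variable {E F : Type*} [NormedAddCommGroup E] [NormedSpace ℝ E]
  [NormedAddCommGroup F] [NormedSpace ℝ F]
  {δG : E → E → E →L[ℝ] F} {δ₂G : E → E → E → E →L[ℝ] E →L[ℝ] F} {S : Set E}

theorem dividedDiff_reflect_sub_diag
    (hlaw₁ : ∀ u ∈ S, ∀ v ∈ S, ∀ y ∈ S, δG u y - δG v y = δ₂G u y v (u - v))
    (hlaw₂ : ∀ x ∈ S, ∀ u ∈ S, ∀ v ∈ S, δG x u - δG x v = δ₂G x u v (u - v))
    {x y : E} (hx : x ∈ S) (hy : y ∈ S) (hxy : 2 • x - y ∈ S) :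
    δG (2 • x - y) y - δG x x = (δ₂G (2 • x - y) y x - δ₂G x y x) (x - y) := by
  calc δG (2 • x - y) y - δG x x = (δG (2 • x - y) y - δG x y) + (δG x y - δG x x) := by
        abel
    _ = δ₂G (2 • x - y) y x (x - y) - δ₂G x y x (x - y) := by
        rw [hlaw₁ _ hxy _ hx _ hy, hlaw₂ _ hx _ hy _ hx, two_smul_sub_sub_self, ← neg_sub x y,
          map_neg, ← sub_eq_add_neg]
    _ = (δ₂G (2 • x - y) y x - δ₂G x y x) (x - y) := (sub_apply _ _ _).symm

theorem norm_dividedDiff_reflect_sub_diag_le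
    (hlaw₁ : ∀ u ∈ S, ∀ v ∈ S, ∀ y ∈ S, δG u y - δG v y = δ₂G u y v (u - v))
    (hlaw₂ : ∀ x ∈ S, ∀ u ∈ S, ∀ v ∈ S, δG x u - δG x v = δ₂G x u v (u - v)) {N : ℝ}
    (hN : ∀ u ∈ S, ∀ v ∈ S, ∀ x ∈ S, ∀ y ∈ S, ‖δ₂G u x y - δ₂G v x y‖ ≤ N * ‖u - v‖)
    {x y : E} (hx : x ∈ S) (hy : y ∈ S) (hxy : 2 • x - y ∈ S) :
    ‖δG (2 • x - y) y - δG x x‖ ≤ N * ‖x - y‖ ^ 2 := by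
  rw [dividedDiff_reflect_sub_diag hlaw₁ hlaw₂ hx hy hxy]
  calc ‖(δ₂G (2 • x - y) y x - δ₂G x y x) (x - y)‖
      ≤ ‖δ₂G (2 • x - y) y x - δ₂G x y x‖ * ‖x - y‖ := ContinuousLinearMap.le_opNorm _ _
    _ ≤ N * ‖2 • x - y - x‖ * ‖x - y‖ := by gcongr; exact hN _ hxy _ hx _ hy _ hx
    _ = N * ‖x - y‖ ^ 2 := by rw [two_smul_sub_sub_self]; ring

end DividedDifference

theorem A0_sub_integral_sub_dividedDiff_estimate_general
    {n m : ℕ}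
    (F' : EuclideanSpace ℝ (Fin n) →
      (EuclideanSpace ℝ (Fin n) →L[ℝ] EuclideanSpace ℝ (Fin m)))
    (δG : EuclideanSpace ℝ (Fin n) → EuclideanSpace ℝ (Fin n) →
      (EuclideanSpace ℝ (Fin n) →L[ℝ] EuclideanSpace ℝ (Fin m)))
    (δ₂G : EuclideanSpace ℝ (Fin n) → EuclideanSpace ℝ (Fin n) →
      EuclideanSpace ℝ (Fin n) →
      (EuclideanSpace ℝ (Fin n) →L[ℝ]
        (EuclideanSpace ℝ (Fin n) →L[ℝ] EuclideanSpace ℝ (Fin m))))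
    (S : Set (EuclideanSpace ℝ (Fin n))) (hS : Convex ℝ S)
    (xs x₀ xm1 : EuclideanSpace ℝ (Fin n))
    (hxs : xs ∈ S) (hx₀ : x₀ ∈ S) (hxm1 : xm1 ∈ S) (hx₂ : 2 • x₀ - xm1 ∈ S)
    (hlaw₁ : ∀ u ∈ S, ∀ v ∈ S, ∀ y ∈ S, δG u y - δG v y = (δ₂G u y v) (u - v))
    (hlaw₂ : ∀ x ∈ S, ∀ u ∈ S, ∀ v ∈ S, δG x u - δG x v = (δ₂G x u v) (u - v))
    (L M N : ℝ)
    (hL : ∀ u ∈ S, ∀ v ∈ S, ‖F' u - F' v‖ ≤ L * ‖u - v‖)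
    (hM : ∀ x ∈ S, ∀ y ∈ S, ∀ u ∈ S, ∀ v ∈ S,
      ‖δG x y - δG u v‖ ≤ M * (‖x - u‖ + ‖y - v‖))
    (hN : ∀ u ∈ S, ∀ v ∈ S, ∀ x ∈ S, ∀ y ∈ S,
      ‖δ₂G u x y - δ₂G v x y‖ ≤ N * ‖u - v‖) :
    ‖(F' x₀ + δG (2 • x₀ - xm1) xm1) -
        (∫ t in (0:ℝ)..1, F' (xs + t • (x₀ - xs))) - δG x₀ xs‖ ≤
      (L / 2 + M) * ‖x₀ - xs‖ + N * ‖x₀ - xm1‖ ^ 2 := by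
  have hM' : ‖δG x₀ x₀ - δG x₀ xs‖ ≤ M * ‖x₀ - xs‖ := by
    simpa using hM x₀ hx₀ x₀ hx₀ x₀ hx₀ xs hxs
  calc _ = ‖(F' x₀ - ∫ t in (0:ℝ)..1, F' (xs + t • (x₀ - xs)))
        + (δG (2 • x₀ - xm1) xm1 - δG x₀ x₀) + (δG x₀ x₀ - δG x₀ xs)‖ := by congr 1; abel
    _ ≤ ‖F' x₀ - ∫ t in (0:ℝ)..1, F' (xs + t • (x₀ - xs))‖
        + ‖δG (2 • x₀ - xm1) xm1 - δG x₀ x₀‖ + ‖δG x₀ x₀ - δG x₀ xs‖ := norm_add₃_le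
    _ ≤ L / 2 * ‖x₀ - xs‖ + N * ‖x₀ - xm1‖ ^ 2 + M * ‖x₀ - xs‖ := by
        gcongr
        · exact norm_sub_integral_segment_le hS hL hxs hx₀
        · exact norm_dividedDiff_reflect_sub_diag_le hlaw₁ hlaw₂ hN hx₀ hxm1 hx₂
    _ = (L / 2 + M) * ‖x₀ - xs‖ + N * ‖x₀ - xm1‖ ^ 2 := by ring

/-- estimate for
`‖A₀ − ∫₀¹ F'(x* + t(x₀ − x*)) dt − δG(x₀, x*)‖` with
`A₀ = F'(x₀) + δG(2x₀ − x₋₁, x₋₁)`. -/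
theorem A0_sub_integral_sub_dividedDiff_estimate
    {n m : ℕ}
    (F G : EuclideanSpace ℝ (Fin n) → EuclideanSpace ℝ (Fin m))
    (F' : EuclideanSpace ℝ (Fin n) →
      (EuclideanSpace ℝ (Fin n) →L[ℝ] EuclideanSpace ℝ (Fin m)))
    (δG : EuclideanSpace ℝ (Fin n) → EuclideanSpace ℝ (Fin n) →
      (EuclideanSpace ℝ (Fin n) →L[ℝ] EuclideanSpace ℝ (Fin m)))
    (δ₂G : EuclideanSpace ℝ (Fin n) → EuclideanSpace ℝ (Fin n) →
      EuclideanSpace ℝ (Fin n) →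
      (EuclideanSpace ℝ (Fin n) →L[ℝ]
        (EuclideanSpace ℝ (Fin n) →L[ℝ] EuclideanSpace ℝ (Fin m))))
    (S : Set (EuclideanSpace ℝ (Fin n))) (hS : Convex ℝ S)
    (xs x₀ xm1 : EuclideanSpace ℝ (Fin n))
    (hxs : xs ∈ S) (hx₀ : x₀ ∈ S) (hxm1 : xm1 ∈ S) (hx₂ : 2 • x₀ - xm1 ∈ S)
    (hF : ∀ x ∈ S, HasFDerivAt F (F' x) x)
    (hFcont : ContinuousOn F' S)
    (hδG : ∀ x ∈ S, ∀ y ∈ S, (δG x y) (x - y) = G x - G y)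
    (hlaw₁ : ∀ u ∈ S, ∀ v ∈ S, ∀ y ∈ S, δG u y - δG v y = (δ₂G u y v) (u - v))
    (hlaw₂ : ∀ x ∈ S, ∀ u ∈ S, ∀ v ∈ S, δG x u - δG x v = (δ₂G x u v) (u - v))
    (L M N : ℝ)
    (hL : ∀ u ∈ S, ∀ v ∈ S, ‖F' u - F' v‖ ≤ L * ‖u - v‖)
    (hM : ∀ x ∈ S, ∀ y ∈ S, ∀ u ∈ S, ∀ v ∈ S,
      ‖δG x y - δG u v‖ ≤ M * (‖x - u‖ + ‖y - v‖))
    (hN : ∀ u ∈ S, ∀ v ∈ S, ∀ x ∈ S, ∀ y ∈ S,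
      ‖δ₂G u x y - δ₂G v x y‖ ≤ N * ‖u - v‖) :
    ‖(F' x₀ + δG (2 • x₀ - xm1) xm1) -
        (∫ t in (0:ℝ)..1, F' (xs + t • (x₀ - xs))) - δG x₀ xs‖ ≤
      (L / 2 + M) * ‖x₀ - xs‖ + N * ‖x₀ - xm1‖ ^ 2 :=
  A0_sub_integral_sub_dividedDiff_estimate_general F' δG δ₂G S hS xs x₀ xm1 hxs hx₀ hxm1 hx₂ hlaw₁
    hlaw₂ L M N hL hM hN
end

section
/- Let F : ℝⁿ → ℝᵐ be continuously differentiable and G : ℝⁿ → ℝᵐ admit first- and second-order divided differences δG, δ²G with the defining laws and the Lipschitz conditions with constants L (for F' on the relevant set), M, N (for δG and δ²G). Let x* satisfy A*ᵀ(F(x*) + G(x*)) = 0 with A* = F'(x*) + δG(x*, x*), ‖F(x*) + G(x*)‖ ≤ η. Let x, x' be two points, set A = F'(x) + δG(2x − x', x'), and assume AᵀA is invertible with ‖(AᵀA)⁻¹‖ ≤ g. Then the next Gauss–Newton–Kurchatov iterate x⁺ = x − (AᵀA)⁻¹Aᵀ(F(x) + G(x)) satisfies ‖x⁺ − x*‖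 ≤ g·{[α + (L + 2M)‖x − x*‖ + N‖x − x'‖²]·[(L/2 + M)‖x − x*‖ + N‖x − x'‖²]·‖x − x*‖ + η·[(L + 2M)‖x − x*‖ + N‖x − x'‖²]}, where ‖A*‖ ≤ α. -/
/-!
With `R = F + G`, stationarity `A*ᵀ R(x*) = 0` turns the Gauss–Newton step into the error identity
`x⁺ - x* = (AᵀA)⁻¹ (Aᵀ (A (x - x*) - (R x - R x*)) - (A - A*)ᵀ R x*)`.
The linearization error `A (x - x*) - (R x - R x*)` is quadratic in `‖x - x*‖` by Taylor's bound for
`F` and the Lipschitz bound for `δG`, up to the Kurchatov term: the divided difference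
`δG (2x - x', x')` taken on the symmetric pair around `x` differs from `δG (x, x)` by a difference of
two second-order divided differences, hence only by `N ‖x - x'‖²`.
-/

open ContinuousLinearMap Set

theorem Convex.norm_image_sub_sub_fderiv_le {E F : Type*} [NormedAddCommGroup E]
    [NormedSpace ℝ E] [NormedAddCommGroup F] [NormedSpace ℝ F] {f : E → F} {f' : E → E →L[ℝ] F}
    {S : Set E} (hS : Convex ℝ S) (hf : ∀ z ∈ S, HasFDerivAt f (f' z) z) {L : ℝ}
    (hL : ∀ u ∈ S, ∀ v ∈ S, ‖f' u - f' v‖ ≤ L * ‖u - v‖) {a b : E} (ha : a ∈ S) (hb : b ∈ S) :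
    ‖f b - f a - f' b (b - a)‖ ≤ L / 2 * ‖b - a‖ ^ 2 := by
  set d := b - a
  have hseg : ∀ t ∈ Icc (0 : ℝ) 1, b - t • d ∈ S := fun t ht => by
    convert hS hb ha (sub_nonneg.2 ht.2) ht.1 (by ring) using 1
    module
  let φ : ℝ → F := fun t => f (b - t • d) - f b + t • f' b d
  have hφ : ∀ t ∈ Icc (0 : ℝ) 1, HasDerivAt φ (f' b d - f' (b - t • d) d) t := by
    intro t ht
    have hpath : HasDerivAt (fun s : ℝ => b - s • d) (-d) t :=
      (((hasDerivAt_id t).smul_const d).const_sub b).congr_deriv (by simp)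
    refine ((((hf _ (hseg t ht)).comp_hasDerivAt t hpath).sub_const (f b)).add
      ((hasDerivAt_id t).smul_const (f' b d))).congr_deriv ?_
    simp only [map_neg, one_smul]
    abel
  have hB : ∀ t, HasDerivAt (fun t : ℝ => L / 2 * ‖d‖ ^ 2 * t ^ 2) (L * ‖d‖ ^ 2 * t) t := by
    intro t
    refine ((hasDerivAt_pow 2 t).const_mul (L / 2 * ‖d‖ ^ 2)).congr_deriv ?_
    ring
  have hbound : ∀ t ∈ Ico (0 : ℝ) 1, ‖f' b d - f' (b - t • d) d‖ ≤ L * ‖d‖ ^ 2 * t := by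
    intro t ht
    have hLt : ‖f' b - f' (b - t • d)‖ ≤ L * (t * ‖d‖) := by
      simpa [norm_smul, abs_of_nonneg ht.1] using hL b hb _ (hseg t (Ico_subset_Icc_self ht))
    calc ‖f' b d - f' (b - t • d) d‖ = ‖(f' b - f' (b - t • d)) d‖ := by rw [sub_apply]
      _ ≤ ‖f' b - f' (b - t • d)‖ * ‖d‖ := le_opNorm _ _
      _ ≤ L * (t * ‖d‖) * ‖d‖ := mul_le_mul_of_nonneg_right hLt (norm_nonneg _)
      _ = L * ‖d‖ ^ 2 * t := by ring
  -- Fencing against `L t² ‖d‖² / 2` keeps the factor `1 / 2` that a plain mean value bound loses.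
  have hφ1 := image_norm_le_of_norm_deriv_right_le_deriv_boundary
    (fun t ht => (hφ t ht).continuousAt.continuousWithinAt)
    (fun t ht => (hφ t (Ico_subset_Icc_self ht)).hasDerivWithinAt) (by simp [φ]) hB hbound
    (right_mem_Icc.2 zero_le_one)
  have hφ1_eq : φ 1 = -(f b - f a - f' b d) := by
    simp only [φ, d, one_smul, sub_sub_cancel]
    abel
  rwa [hφ1_eq, norm_neg, one_pow, mul_one] at hφ1

section DividedDifference

variable {E Y : Type*} [NormedAddCommGroup E] [NormedSpace ℝ E] [NormedAddCommGroup Y]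
  [NormedSpace ℝ Y] {S : Set E} {F G : E → Y} {F' : E → E →L[ℝ] Y} {δG : E → E → E →L[ℝ] Y}
  {δ₂G : E → E → E → E →L[ℝ] E →L[ℝ] Y} {xs x x' : E} {L M N : ℝ}

theorem norm_divided_difference_symm_sub_diag_le
    (hlaw₁ : ∀ u ∈ S, ∀ v ∈ S, ∀ y ∈ S, δG u y - δG v y = (δ₂G u y v) (u - v))
    (hlaw₂ : ∀ z ∈ S, ∀ u ∈ S, ∀ v ∈ S, δG z u - δG z v = (δ₂G z u v) (u - v))
    (hN : ∀ u ∈ S, ∀ v ∈ S, ∀ a ∈ S, ∀ b ∈ S, ‖δ₂G u a b - δ₂G v a b‖ ≤ N * ‖u - v‖)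
    (hx : x ∈ S) (hx' : x' ∈ S) (hx₂ : 2 • x - x' ∈ S) :
    ‖δG (2 • x - x') x' - δG x x‖ ≤ N * ‖x - x'‖ ^ 2 := by
  have hstep : 2 • x - x' - x = x - x' := by rw [two_smul]; abel
  have hsplit : δG (2 • x - x') x' - δG x x = (δ₂G (2 • x - x') x' x - δ₂G x x' x) (x - x') := by
    rw [← sub_add_sub_cancel _ (δG x x'), hlaw₁ _ hx₂ _ hx _ hx', hlaw₂ _ hx _ hx' _ hx, hstep,
      sub_apply, ← neg_sub x, map_neg]
    exact (sub_eq_add_neg _ _).symm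
  calc ‖δG (2 • x - x') x' - δG x x‖
      ≤ ‖δ₂G (2 • x - x') x' x - δ₂G x x' x‖ * ‖x - x'‖ := hsplit ▸ le_opNorm _ _
    _ ≤ N * ‖2 • x - x' - x‖ * ‖x - x'‖ :=
      mul_le_mul_of_nonneg_right (hN _ hx₂ _ hx _ hx' _ hx) (norm_nonneg _)
    _ = N * ‖x - x'‖ ^ 2 := by rw [hstep]; ring

theorem norm_kurchatov_jacobian_sub_le
    (hL : ∀ u ∈ S, ∀ v ∈ S, ‖F' u - F' v‖ ≤ L * ‖u - v‖)
    (hM : ∀ a ∈ S, ∀ b ∈ S, ∀ u ∈ S, ∀ v ∈ S, ‖δG a b - δG u v‖ ≤ M * (‖a - u‖ + ‖b - v‖))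
    (hlaw₁ : ∀ u ∈ S, ∀ v ∈ S, ∀ y ∈ S, δG u y - δG v y = (δ₂G u y v) (u - v))
    (hlaw₂ : ∀ z ∈ S, ∀ u ∈ S, ∀ v ∈ S, δG z u - δG z v = (δ₂G z u v) (u - v))
    (hN : ∀ u ∈ S, ∀ v ∈ S, ∀ a ∈ S, ∀ b ∈ S, ‖δ₂G u a b - δ₂G v a b‖ ≤ N * ‖u - v‖)
    (hxs : xs ∈ S) (hx : x ∈ S) (hx' : x' ∈ S) (hx₂ : 2 • x - x' ∈ S) :
    ‖F' x + δG (2 • x - x') x' - (F' xs + δG xs xs)‖ ≤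
      (L + 2 * M) * ‖x - xs‖ + N * ‖x - x'‖ ^ 2 := by
  have hsplit : F' x + δG (2 • x - x') x' - (F' xs + δG xs xs) =
      (F' x - F' xs) + (δG (2 • x - x') x' - δG x x) + (δG x x - δG xs xs) := by abel
  calc ‖F' x + δG (2 • x - x') x' - (F' xs + δG xs xs)‖
      ≤ ‖F' x - F' xs‖ + ‖δG (2 • x - x') x' - δG x x‖ + ‖δG x x - δG xs xs‖ :=
        hsplit ▸ norm_add₃_le
    _ ≤ L * ‖x - xs‖ + N * ‖x - x'‖ ^ 2 + M * (‖x - xs‖ + ‖x - xs‖) := by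
        gcongr
        · exact hL _ hx _ hxs
        · exact norm_divided_difference_symm_sub_diag_le hlaw₁ hlaw₂ hN hx hx' hx₂
        · exact hM _ hx _ hx _ hxs _ hxs
    _ = (L + 2 * M) * ‖x - xs‖ + N * ‖x - x'‖ ^ 2 := by ring

theorem norm_kurchatov_jacobian_apply_sub_le (hS : Convex ℝ S)
    (hF : ∀ z ∈ S, HasFDerivAt F (F' z) z) (hδG : ∀ u ∈ S, ∀ v ∈ S, (δG u v) (u - v) = G u - G v)
    (hL : ∀ u ∈ S, ∀ v ∈ S, ‖F' u - F' v‖ ≤ L * ‖u - v‖)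
    (hM : ∀ a ∈ S, ∀ b ∈ S, ∀ u ∈ S, ∀ v ∈ S, ‖δG a b - δG u v‖ ≤ M * (‖a - u‖ + ‖b - v‖))
    (hlaw₁ : ∀ u ∈ S, ∀ v ∈ S, ∀ y ∈ S, δG u y - δG v y = (δ₂G u y v) (u - v))
    (hlaw₂ : ∀ z ∈ S, ∀ u ∈ S, ∀ v ∈ S, δG z u - δG z v = (δ₂G z u v) (u - v))
    (hN : ∀ u ∈ S, ∀ v ∈ S, ∀ a ∈ S, ∀ b ∈ S, ‖δ₂G u a b - δ₂G v a b‖ ≤ N * ‖u - v‖)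
    (hxs : xs ∈ S) (hx : x ∈ S) (hx' : x' ∈ S) (hx₂ : 2 • x - x' ∈ S) :
    ‖(F' x + δG (2 • x - x') x') (x - xs) - (F x + G x - (F xs + G xs))‖ ≤
      ((L / 2 + M) * ‖x - xs‖ + N * ‖x - x'‖ ^ 2) * ‖x - xs‖ := by
  have hδ : ‖δG (2 • x - x') x' - δG x xs‖ ≤ N * ‖x - x'‖ ^ 2 + M * ‖x - xs‖ := by
    calc ‖δG (2 • x - x') x' - δG x xs‖
        ≤ ‖δG (2 • x - x') x' - δG x x‖ + ‖δG x x - δG x xs‖ := norm_sub_le_norm_sub_add_norm_sub _ _ _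
      _ ≤ N * ‖x - x'‖ ^ 2 + M * (‖x - x‖ + ‖x - xs‖) :=
        add_le_add (norm_divided_difference_symm_sub_diag_le hlaw₁ hlaw₂ hN hx hx' hx₂)
          (hM _ hx _ hx _ hx _ hxs)
      _ = N * ‖x - x'‖ ^ 2 + M * ‖x - xs‖ := by simp
  have hsplit : (F' x + δG (2 • x - x') x') (x - xs) - (F x + G x - (F xs + G xs)) =
      (δG (2 • x - x') x' - δG x xs) (x - xs) - (F x - F xs - F' x (x - xs)) := by
    rw [add_apply, sub_apply, hδG _ hx _ hxs]
    abel
  calc ‖(F' x + δG (2 • x - x') x') (x - xs) - (F x + G x - (F xs + G xs))‖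
      ≤ ‖δG (2 • x - x') x' - δG x xs‖ * ‖x - xs‖ + ‖F x - F xs - F' x (x - xs)‖ :=
        hsplit ▸ (norm_sub_le _ _).trans (add_le_add_left (le_opNorm _ _) _)
    _ ≤ (N * ‖x - x'‖ ^ 2 + M * ‖x - xs‖) * ‖x - xs‖ + L / 2 * ‖x - xs‖ ^ 2 := by
        gcongr
        exact hS.norm_image_sub_sub_fderiv_le hF hL hxs hx
    _ = ((L / 2 + M) * ‖x - xs‖ + N * ‖x - x'‖ ^ 2) * ‖x - xs‖ := by ring

end DividedDifference

section GaussNewton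

variable {𝕜 E F : Type*} [RCLike 𝕜] [NormedAddCommGroup E] [InnerProductSpace 𝕜 E]
  [CompleteSpace E] [NormedAddCommGroup F] [InnerProductSpace 𝕜 F] [CompleteSpace F]

theorem norm_gauss_newton_step_sub_le {A A₀ : E →L[𝕜] F} (hA : IsUnit (adjoint A ∘L A)) {r₀ : F}
    (hstat : adjoint A₀ r₀ = 0) (x x₀ : E) (r : F) :
    ‖x - Ring.inverse (adjoint A ∘L A) (adjoint A r) - x₀‖ ≤
      ‖Ring.inverse (adjoint A ∘L A)‖ * (‖A‖ * ‖A (x - x₀) - (r - r₀)‖ + ‖A - A₀‖ * ‖r₀‖) := by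
  set B := Ring.inverse (adjoint A ∘L A)
  have hB : ∀ v, B (adjoint A (A v)) = v := fun v => by
    simpa using congr($(Ring.inverse_mul_cancel _ hA) v)
  have herr : x - B (adjoint A r) - x₀ =
      B (adjoint A (A (x - x₀) - (r - r₀)) - adjoint (A - A₀) r₀) := by
    simp only [map_sub, sub_apply, hstat, sub_zero, hB]
    abel
  rw [herr]
  refine (le_opNorm _ _).trans (mul_le_mul_of_nonneg_left ((norm_sub_le _ _).trans ?_)
    (norm_nonneg _))
  gcongr <;> refine (le_opNorm _ _).trans_eq ?_ <;> rw [LinearIsometryEquiv.norm_map]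

end GaussNewton
theorem gauss_newton_kurchatov_one_step_estimate_general
    {n m : ℕ}
    (F G : EuclideanSpace ℝ (Fin n) → EuclideanSpace ℝ (Fin m))
    (F' : EuclideanSpace ℝ (Fin n) →
      (EuclideanSpace ℝ (Fin n) →L[ℝ] EuclideanSpace ℝ (Fin m)))
    (δG : EuclideanSpace ℝ (Fin n) → EuclideanSpace ℝ (Fin n) →
      (EuclideanSpace ℝ (Fin n) →L[ℝ] EuclideanSpace ℝ (Fin m)))
    (δ₂G : EuclideanSpace ℝ (Fin n) → EuclideanSpace ℝ (Fin n) →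
      EuclideanSpace ℝ (Fin n) →
      (EuclideanSpace ℝ (Fin n) →L[ℝ]
        (EuclideanSpace ℝ (Fin n) →L[ℝ] EuclideanSpace ℝ (Fin m))))
    (S : Set (EuclideanSpace ℝ (Fin n))) (hS : Convex ℝ S)
    (xs x x' : EuclideanSpace ℝ (Fin n))
    (hxs : xs ∈ S) (hx : x ∈ S) (hx' : x' ∈ S) (hx₂ : 2 • x - x' ∈ S)
    (hF : ∀ z ∈ S, HasFDerivAt F (F' z) z)
    (hδG : ∀ u ∈ S, ∀ v ∈ S, (δG u v) (u - v) = G u - G v)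
    (hlaw₁ : ∀ u ∈ S, ∀ v ∈ S, ∀ y ∈ S, δG u y - δG v y = (δ₂G u y v) (u - v))
    (hlaw₂ : ∀ z ∈ S, ∀ u ∈ S, ∀ v ∈ S, δG z u - δG z v = (δ₂G z u v) (u - v))
    (L M N α η g : ℝ)
    (hL : ∀ u ∈ S, ∀ v ∈ S, ‖F' u - F' v‖ ≤ L * ‖u - v‖)
    (hM : ∀ a ∈ S, ∀ b ∈ S, ∀ u ∈ S, ∀ v ∈ S,
      ‖δG a b - δG u v‖ ≤ M * (‖a - u‖ + ‖b - v‖))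
    (hN : ∀ u ∈ S, ∀ v ∈ S, ∀ a ∈ S, ∀ b ∈ S,
      ‖δ₂G u a b - δ₂G v a b‖ ≤ N * ‖u - v‖)
    (hstat : (ContinuousLinearMap.adjoint (F' xs + δG xs xs)) (F xs + G xs) = 0)
    (hη : ‖F xs + G xs‖ ≤ η)
    (hα : ‖F' xs + δG xs xs‖ ≤ α)
    (A : EuclideanSpace ℝ (Fin n) →L[ℝ] EuclideanSpace ℝ (Fin m))
    (hA : A = F' x + δG (2 • x - x') x')
    (hUnit : IsUnit ((ContinuousLinearMap.adjoint A).comp A))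
    (hg : ‖Ring.inverse ((ContinuousLinearMap.adjoint A).comp A)‖ ≤ g)
    (xp : EuclideanSpace ℝ (Fin n))
    (hxp : xp = x - (Ring.inverse ((ContinuousLinearMap.adjoint A).comp A))
      ((ContinuousLinearMap.adjoint A) (F x + G x))) :
    ‖xp - xs‖ ≤
      g * ((α + (L + 2 * M) * ‖x - xs‖ + N * ‖x - x'‖ ^ 2) *
            ((L / 2 + M) * ‖x - xs‖ + N * ‖x - x'‖ ^ 2) * ‖x - xs‖ +
          η * ((L + 2 * M) * ‖x - xs‖ + N * ‖x - x'‖ ^ 2)) := by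
  subst hA hxp
  have hΔ := norm_kurchatov_jacobian_sub_le hL hM hlaw₁ hlaw₂ hN hxs hx hx' hx₂
  have hlin := norm_kurchatov_jacobian_apply_sub_le hS hF hδG hL hM hlaw₁ hlaw₂ hN hxs hx hx' hx₂
  have hAnorm : ‖F' x + δG (2 • x - x') x'‖ ≤
      α + ((L + 2 * M) * ‖x - xs‖ + N * ‖x - x'‖ ^ 2) :=
    (norm_le_norm_add_norm_sub' _ _).trans (add_le_add hα hΔ)
  refine (norm_gauss_newton_step_sub_le hUnit hstat x xs (F x + G x)).trans ?_
  calc _ ≤ g * ((α + ((L + 2 * M) * ‖x - xs‖ + N * ‖x - x'‖ ^ 2)) *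
          (((L / 2 + M) * ‖x - xs‖ + N * ‖x - x'‖ ^ 2) * ‖x - xs‖) +
        ((L + 2 * M) * ‖x - xs‖ + N * ‖x - x'‖ ^ 2) * η) := by
        gcongr
        · exact (norm_nonneg _).trans hg
        · exact (norm_nonneg _).trans hAnorm
        · exact (norm_nonneg _).trans hΔ
    _ = _ := by ring

/-- one-step error estimate for the Gauss–Newton–Kurchatov iterate
`x⁺ = x − (AᵀA)⁻¹Aᵀ(F(x) + G(x))` with `A = F'(x) + δG(2x − x', x')`. -/
theorem gauss_newton_kurchatov_one_step_estimate
    {n m : ℕ}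
    (F G : EuclideanSpace ℝ (Fin n) → EuclideanSpace ℝ (Fin m))
    (F' : EuclideanSpace ℝ (Fin n) →
      (EuclideanSpace ℝ (Fin n) →L[ℝ] EuclideanSpace ℝ (Fin m)))
    (δG : EuclideanSpace ℝ (Fin n) → EuclideanSpace ℝ (Fin n) →
      (EuclideanSpace ℝ (Fin n) →L[ℝ] EuclideanSpace ℝ (Fin m)))
    (δ₂G : EuclideanSpace ℝ (Fin n) → EuclideanSpace ℝ (Fin n) →
      EuclideanSpace ℝ (Fin n) →
      (EuclideanSpace ℝ (Fin n) →L[ℝ]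
        (EuclideanSpace ℝ (Fin n) →L[ℝ] EuclideanSpace ℝ (Fin m))))
    (S : Set (EuclideanSpace ℝ (Fin n))) (hS : Convex ℝ S)
    (xs x x' : EuclideanSpace ℝ (Fin n))
    (hxs : xs ∈ S) (hx : x ∈ S) (hx' : x' ∈ S) (hx₂ : 2 • x - x' ∈ S)
    (hF : ∀ z ∈ S, HasFDerivAt F (F' z) z)
    (hFcont : ContinuousOn F' S)
    (hδG : ∀ u ∈ S, ∀ v ∈ S, (δG u v) (u - v) = G u - G v)
    (hlaw₁ : ∀ u ∈ S, ∀ v ∈ S, ∀ y ∈ S, δG u y - δG v y = (δ₂G u y v) (u - v))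
    (hlaw₂ : ∀ z ∈ S, ∀ u ∈ S, ∀ v ∈ S, δG z u - δG z v = (δ₂G z u v) (u - v))
    (L M N α η g : ℝ)
    (hL : ∀ u ∈ S, ∀ v ∈ S, ‖F' u - F' v‖ ≤ L * ‖u - v‖)
    (hM : ∀ a ∈ S, ∀ b ∈ S, ∀ u ∈ S, ∀ v ∈ S,
      ‖δG a b - δG u v‖ ≤ M * (‖a - u‖ + ‖b - v‖))
    (hN : ∀ u ∈ S, ∀ v ∈ S, ∀ a ∈ S, ∀ b ∈ S,
      ‖δ₂G u a b - δ₂G v a b‖ ≤ N * ‖u - v‖)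
    (hstat : (ContinuousLinearMap.adjoint (F' xs + δG xs xs)) (F xs + G xs) = 0)
    (hη : ‖F xs + G xs‖ ≤ η)
    (hα : ‖F' xs + δG xs xs‖ ≤ α)
    (A : EuclideanSpace ℝ (Fin n) →L[ℝ] EuclideanSpace ℝ (Fin m))
    (hA : A = F' x + δG (2 • x - x') x')
    (hUnit : IsUnit ((ContinuousLinearMap.adjoint A).comp A))
    (hg : ‖Ring.inverse ((ContinuousLinearMap.adjoint A).comp A)‖ ≤ g)
    (xp : EuclideanSpace ℝ (Fin n))
    (hxp : xp = x - (Ring.inverse ((ContinuousLinearMap.adjoint A).comp A))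
      ((ContinuousLinearMap.adjoint A) (F x + G x))) :
    ‖xp - xs‖ ≤
      g * ((α + (L + 2 * M) * ‖x - xs‖ + N * ‖x - x'‖ ^ 2) *
            ((L / 2 + M) * ‖x - xs‖ + N * ‖x - x'‖ ^ 2) * ‖x - xs‖ +
          η * ((L + 2 * M) * ‖x - xs‖ + N * ‖x - x'‖ ^ 2)) :=
  gauss_newton_kurchatov_one_step_estimate_general F G F' δG δ₂G S hS xs x x' hxs hx hx' hx₂ hF hδG
    hlaw₁ hlaw₂ L M N α η g hL hM hN hstat hη hα A hA hUnit hg xp hxp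
end

section
/- Let B, α, η, L, M, N, L₀, M₀, N₀ ≥ 0 with B > 0, and let r > 0 satisfy B(2α + (L₀ + 2M₀)r + 4N₀r²)((L₀ + 2M₀)r + 4N₀r²) < 1, so that g(r) = B[1 − B(2α + (L₀ + 2M₀)r + 4N₀r²)((L₀ + 2M₀)r + 4N₀r²)]⁻¹ is defined. Define φ(r) = α + (L + 2M)r + 4Nr², a(r) = g(r)·((L + 2M + 3Nr)η + φ(r)·((L/2 + M)r + 4Nr²)), b(r) = g(r)·N·r·η, and q(r) = B[φ(r)((L/2 + M)r + 4Nr²) + (L + 2M + 4Nr)η] + B[2α + (L₀ + 2M₀)r + 4N₀r²][(L₀ + 2M₀)r + 4N₀r²] − 1. If q(r) = 0, then a(r) ≥ 0, b(r) ≥ 0, and a(r) + b(r) = 1. -/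
/-! Since `3Nrη + Nrη = 4Nrη`, `a(r) + b(r) = g(r) S` with `S` the numerator occurring in `q`, and
`q(r) = 0` says exactly that `B S` equals the denominator `1 - B(2α + …)(…)` of `g(r)`; hence the
sum is `1`. Nonnegativity is immediate since `g(r) > 0`. -/

theorem mul_inv_one_sub_mul_eq_one {K : Type*} [Field K] {B c S : K} (hc : c ≠ 1)
    (h : B * S + c - 1 = 0) : B * (1 - c)⁻¹ * S = 1 := by
  have hS : B * S = 1 - c := by linear_combination h
  rw [mul_right_comm, hS, mul_inv_cancel₀ (sub_ne_zero.2 hc.symm)]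

theorem a_add_b_eq_one_at_root_general
    (B α η L M N L₀ M₀ N₀ r : ℝ)
    (hB : 0 < B) (hα : 0 ≤ α) (hη : 0 ≤ η) (hL : 0 ≤ L) (hM : 0 ≤ M)
    (hN : 0 ≤ N) (hr : 0 < r)
    (hdenom : B * (2*α + (L₀ + 2*M₀)*r + 4*N₀*r^2)
        * ((L₀ + 2*M₀)*r + 4*N₀*r^2) < 1)
    (g φ a b q : ℝ)
    (hg : g = B * (1 - B * (2*α + (L₀ + 2*M₀)*r + 4*N₀*r^2)
        * ((L₀ + 2*M₀)*r + 4*N₀*r^2))⁻¹)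
    (hφ : φ = α + (L + 2*M)*r + 4*N*r^2)
    (ha : a = g * ((L + 2*M + 3*N*r)*η + φ * ((L/2 + M)*r + 4*N*r^2)))
    (hb : b = g * N * r * η)
    (hqdef : q = B * (φ * ((L/2 + M)*r + 4*N*r^2) + (L + 2*M + 4*N*r)*η)
        + B * (2*α + (L₀ + 2*M₀)*r + 4*N₀*r^2) * ((L₀ + 2*M₀)*r + 4*N₀*r^2) - 1)
    (hroot : q = 0) :
    0 ≤ a ∧ 0 ≤ b ∧ a + b = 1 := by
  have hg_pos : 0 < g := hg ▸ mul_pos hB (inv_pos.2 (sub_pos.2 hdenom))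
  have hφ_nonneg : 0 ≤ φ := hφ ▸ by positivity
  refine ⟨ha ▸ by positivity, hb ▸ by positivity, ?_⟩
  have hsum : a + b = g * (φ * ((L/2 + M)*r + 4*N*r^2) + (L + 2*M + 4*N*r)*η) := by
    rw [ha, hb]; ring
  rw [hsum, hg]
  exact mul_inv_one_sub_mul_eq_one hdenom.ne (hqdef ▸ hroot)

/-- at the positive zero `r` of `q`, the coefficients
`a(r)` and `b(r)` are nonnegative and sum to `1`. -/
theorem a_add_b_eq_one_at_root
    (B α η L M N L₀ M₀ N₀ r : ℝ)
    (hB : 0 < B) (hα : 0 ≤ α) (hη : 0 ≤ η) (hL : 0 ≤ L) (hM : 0 ≤ M)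
    (hN : 0 ≤ N) (hL₀ : 0 ≤ L₀) (hM₀ : 0 ≤ M₀) (hN₀ : 0 ≤ N₀) (hr : 0 < r)
    (hdenom : B * (2*α + (L₀ + 2*M₀)*r + 4*N₀*r^2)
        * ((L₀ + 2*M₀)*r + 4*N₀*r^2) < 1)
    (g φ a b q : ℝ)
    (hg : g = B * (1 - B * (2*α + (L₀ + 2*M₀)*r + 4*N₀*r^2)
        * ((L₀ + 2*M₀)*r + 4*N₀*r^2))⁻¹)
    (hφ : φ = α + (L + 2*M)*r + 4*N*r^2)
    (ha : a = g * ((L + 2*M + 3*N*r)*η + φ * ((L/2 + M)*r + 4*N*r^2)))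
    (hb : b = g * N * r * η)
    (hqdef : q = B * (φ * ((L/2 + M)*r + 4*N*r^2) + (L + 2*M + 4*N*r)*η)
        + B * (2*α + (L₀ + 2*M₀)*r + 4*N₀*r^2) * ((L₀ + 2*M₀)*r + 4*N₀*r^2) - 1)
    (hroot : q = 0) :
    0 ≤ a ∧ 0 ≤ b ∧ a + b = 1 :=
  a_add_b_eq_one_at_root_general B α η L M N L₀ M₀ N₀ r hB hα hη hL hM hN hr hdenom g φ a b q hg hφ
    ha hb hqdef hroot
end

section
/- Let a ≥ 0, b ≥ 0 with a + b < 1, and let (θ_n)_{n ≥ −1} be a sequence of nonnegative real numbers satisfying θ_{n+1} ≤ a·θ_n + b·θ_{n−1} for all n ≥ 0. Then θ_n → 0 as n → ∞. -/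
/-!
Since `a x + b y ≤ (a + b) max x y`, the maximum of two consecutive terms shrinks by the
factor `a + b < 1` every two steps, so `θ n ≤ (a + b) ^ (n / 2) * max (θ 0) (θ 1)`.
-/

open Filter Topology

lemma mul_add_mul_le_add_mul_max {a b : ℝ} (ha : 0 ≤ a) (hb : 0 ≤ b) (x y : ℝ) :
    a * x + b * y ≤ (a + b) * max x y :=
  calc a * x + b * y ≤ a * max x y + b * max x y := by gcongr <;> simp
    _ = (a + b) * max x y := by ring

lemma le_pow_div_two_mul_max_of_le_mul_max {u : ℕ → ℝ} {c : ℝ} (hc0 : 0 ≤ c) (hc1 : c ≤ 1)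
    (hu0 : 0 ≤ u 0) (hu : ∀ k, u (k + 2) ≤ c * max (u (k + 1)) (u k)) (n : ℕ) :
    u n ≤ c ^ (n / 2) * max (u 0) (u 1) := by
  set S := max (u 0) (u 1)
  have hS : 0 ≤ S := hu0.trans (le_max_left _ _)
  induction n using Nat.strong_induction_on with
  | _ n ih =>
    match n with
    | 0 => simp [S]
    | 1 => simp [S]
    | m + 2 =>
      have h_succ : u (m + 1) ≤ c ^ (m / 2) * S :=
        (ih (m + 1) (by omega)).trans <|
          mul_le_mul_of_nonneg_right (pow_le_pow_of_le_one hc0 hc1 (by omega)) hS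
      calc u (m + 2) ≤ c * max (u (m + 1)) (u m) := hu m
        _ ≤ c * (c ^ (m / 2) * S) := by gcongr; exact max_le h_succ (ih m (by omega))
        _ = c ^ ((m + 2) / 2) * S := by rw [show (m + 2) / 2 = m / 2 + 1 by omega]; ring

lemma tendsto_pow_div_two_atTop_nhds_zero {c : ℝ} (hc0 : 0 ≤ c) (hc1 : c < 1) :
    Tendsto (fun n : ℕ => c ^ (n / 2)) atTop (𝓝 0) :=
  (tendsto_pow_atTop_nhds_zero_of_lt_one hc0 hc1).comp
    (tendsto_atTop_atTop.2 fun N => ⟨2 * N, fun n hn => by omega⟩)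

/-- a nonnegative sequence (indexed from `−1`, here shifted so that
`θ 0` is `θ₋₁`) satisfying `θ_{n+1} ≤ a θ_n + b θ_{n−1}` with `a, b ≥ 0`,
`a + b < 1`, converges to `0`. -/
theorem tendsto_zero_of_two_step_contraction
    (a b : ℝ) (ha : 0 ≤ a) (hb : 0 ≤ b) (hab : a + b < 1)
    (θ : ℕ → ℝ) (hθ : ∀ k, 0 ≤ θ k)
    (hrec : ∀ k, θ (k + 2) ≤ a * θ (k + 1) + b * θ k) :
    Filter.Tendsto θ Filter.atTop (nhds 0) := by
  have hc0 : 0 ≤ a + b := add_nonneg ha hb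
  have hcontr : ∀ k, θ (k + 2) ≤ (a + b) * max (θ (k + 1)) (θ k) := fun k =>
    (hrec k).trans (mul_add_mul_le_add_mul_max ha hb _ _)
  have hbound := le_pow_div_two_mul_max_of_le_mul_max hc0 hab.le (hθ 0) hcontr
  have hlim := (tendsto_pow_div_two_atTop_nhds_zero hc0 hab).mul_const (max (θ 0) (θ 1))
  rw [zero_mul] at hlim
  exact squeeze_zero hθ hbound hlim
end
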